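/- arXiv:2111.06963 — 5 statements merged into one kernel-verified Lean document; each statement's English description precedes it below -/
import Mathlib

section
/- There exists a real constant C₂ > 0 such that for all real x ≥ 1, |∑_{1 ≤ k ≤ x} 1/φ(k) − C₁·log x| < C₂, where C₁ = ζ(2)ζ(3)/ζ(6). In particular, since C₁ < 2, there exists a real X such that for all x ≥ X, ∑_{1 ≤ k ≤ x} 1/φ(k) < 2·log x. -/
/-!
With `w(d) = μ(d)² / (d φ(d))`, the identity `n / φ(n) = ∑_{d ∣ n} μ(d)² / φ(d)` (checked on
prime powers) says `1 / φ = w ⋆ (1 / ·)`, so `∑_{k ≤ x} 1 / φ(k) = ∑_{d ≤ x} w(d) H(⌊x / d⌋)` with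
`H` the harmonic numbers. As `n ≤ 2 φ(n)²` for squarefree `n`, `w(d) ≤ 2 d^{-3/2}`, so
`A = ∑ w(d)` and `T = ∑ w(d) log d` converge, and `log (x / d) ≤ H(⌊x / d⌋) ≤ 1 + log (x / d)`
yields `-T ≤ ∑_{k ≤ x} 1 / φ(k) - A log x ≤ A`.
The Euler factor `1 + 1 / (p (p - 1))` of the multiplicative `w` equals
`(1 - p⁻⁶) / ((1 - p⁻²)(1 - p⁻³))`, whence `A = ζ(2) ζ(3) / ζ(6)`; finally `A < 2` from
`ζ(2) = π² / 6`, `ζ(3) ≤ 29 / 24` and `ζ(6) ≥ 65 / 64`.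
-/

open ArithmeticFunction hiding log
open Finset Real
open scoped ArithmeticFunction.Moebius ArithmeticFunction.zeta

namespace ArithmeticFunction

theorem mul_pmul_of_map_mul {R : Type*} [CommSemiring R] {h : ArithmeticFunction R}
    (h_mul : ∀ a b, h (a * b) = h a * h b) (f g : ArithmeticFunction R) :
    (f * g).pmul h = f.pmul h * g.pmul h := by
  ext n
  simp only [pmul_apply, mul_apply, sum_mul]
  refine sum_congr rfl fun x hx => ?_
  rw [← (Nat.mem_divisorsAntidiagonal.mp hx).1, h_mul]
  ring

end ArithmeticFunction

theorem Nat.le_two_mul_totient_sq_of_squarefree {n : ℕ} (hn : Squarefree n) :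
    n ≤ 2 * n.totient ^ 2 := by
  have h_totient : n.totient = ∏ p ∈ n.primeFactors, (p - 1) := by
    have h := Nat.totient_mul_prod_primeFactors n
    rw [Nat.prod_primeFactors_of_squarefree hn, mul_comm] at h
    exact Nat.eq_of_mul_eq_mul_left (Nat.pos_of_ne_zero hn.ne_zero) h
  have h_prime {p : ℕ} (hp : p.Prime) : p ≤ (if p = 2 then 2 else 1) * (p - 1) ^ 2 := by
    split_ifs with h2
    · simp [h2]
    · have h3 : 3 ≤ p := lt_of_le_of_ne hp.two_le (Ne.symm h2)
      zify [hp.one_le]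
      nlinarith
  calc n = ∏ p ∈ n.primeFactors, p := (Nat.prod_primeFactors_of_squarefree hn).symm
    _ ≤ ∏ p ∈ n.primeFactors, (if p = 2 then 2 else 1) * (p - 1) ^ 2 :=
      prod_le_prod' fun p hp => h_prime (Nat.prime_of_mem_primeFactors hp)
    _ = (if 2 ∈ n.primeFactors then 2 else 1) * n.totient ^ 2 := by
      rw [prod_mul_distrib, prod_ite_eq', h_totient, prod_pow]
    _ ≤ 2 * n.totient ^ 2 := by gcongr; split_ifs <;> norm_num

theorem summable_mul_log_of_le_rpow_inv {f : ℕ → ℝ} {C p : ℝ} (hp : 1 < p)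
    (hf_nonneg : ∀ n, 0 ≤ f n) (hf : ∀ n, f n ≤ C * ((n : ℝ) ^ p)⁻¹) :
    Summable fun n => f n * log n := by
  set ε := (p - 1) / 2
  have hε : 0 < ε := by simp only [ε]; linarith
  have hpε : 1 < p - ε := by simp only [ε]; linarith
  have hC : 0 ≤ C := by simpa using (hf_nonneg 1).trans (hf 1)
  refine Summable.of_nonneg_of_le (fun n => mul_nonneg (hf_nonneg n) (log_natCast_nonneg n))
    (fun n => ?_) ((Real.summable_nat_rpow_inv.mpr hpε).mul_left (C / ε))
  rcases n.eq_zero_or_pos with rfl | hn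
  · rw [Nat.cast_zero, log_zero, mul_zero]
    positivity
  have hn' : (0 : ℝ) < n := by exact_mod_cast hn
  calc f n * log n ≤ C * ((n : ℝ) ^ p)⁻¹ * (n ^ ε / ε) :=
        mul_le_mul (hf n) (log_natCast_le_rpow_div n hε) (log_natCast_nonneg n) (by positivity)
    _ = C / ε * ((n : ℝ) ^ (p - ε))⁻¹ := by
        rw [Real.rpow_sub hn']
        field_simp

theorem tsum_le_sum_range_add_of_le_sub {f g : ℕ → ℝ} {M : ℕ} (hf : ∀ n, 0 ≤ f n)
    (hg : ∀ n ≥ M, 0 ≤ g n) (h : ∀ n ≥ M, f n ≤ g n - g (n + 1)) :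
    ∑' n, f n ≤ ∑ n ∈ range M, f n + g M := by
  have h_telescope : ∀ K ≥ M, ∑ n ∈ range K, f n + g K ≤ ∑ n ∈ range M, f n + g M := by
    intro K hK
    induction K, hK using Nat.le_induction with
    | base => rfl
    | succ K hK ih => rw [sum_range_succ]; linarith [h K hK]
  refine Real.tsum_le_of_sum_range_le hf fun K => ?_
  rcases le_total K M with hKM | hMK
  · linarith [hg M le_rfl,
      sum_le_sum_of_subset_of_nonneg (range_subset_range.mpr hKM) fun n _ _ => hf n]
  · linarith [h_telescope K hMK, hg K hMK]

theorem exists_forall_lt_mul_log {S : ℝ → ℝ} {a b C : ℝ} (hab : a < b)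
    (h : ∀ x, 1 ≤ x → |S x - a * log x| < C) : ∃ X, ∀ x, X ≤ x → S x < b * log x := by
  refine ⟨max 1 (exp (C / (b - a))), fun x hx => ?_⟩
  have hx1 : 1 ≤ x := le_of_max_le_left hx
  have h_log : C / (b - a) ≤ log x := by
    rw [← log_exp (C / (b - a))]
    exact log_le_log (exp_pos _) (le_of_max_le_right hx)
  rw [div_le_iff₀ (by linarith)] at h_log
  linarith [(abs_lt.mp (h x hx1)).2]

theorem riemannZeta_natCast_eq_tsum {k : ℕ} (hk : 1 < k) :
    riemannZeta k = ((∑' n : ℕ, 1 / (n : ℝ) ^ k : ℝ) : ℂ) := by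
  rw [zeta_nat_eq_tsum_of_gt_one hk, Complex.ofReal_tsum]
  push_cast
  rfl

noncomputable def natInv : ArithmeticFunction ℝ := ⟨fun n => (n : ℝ)⁻¹, by simp⟩

noncomputable def divTotient : ArithmeticFunction ℝ := ⟨fun n => n / n.totient, by simp⟩

noncomputable def moebiusSqDivTotient : ArithmeticFunction ℝ :=
  ⟨fun n => (μ n : ℝ) ^ 2 / n.totient, by simp⟩

noncomputable def totientWeight : ArithmeticFunction ℝ := moebiusSqDivTotient.pmul natInv

theorem natInv_apply (n : ℕ) : natInv n = (n : ℝ)⁻¹ := rfl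

theorem divTotient_apply (n : ℕ) : divTotient n = n / n.totient := rfl

theorem moebiusSqDivTotient_apply (n : ℕ) :
    moebiusSqDivTotient n = (μ n : ℝ) ^ 2 / n.totient := rfl

theorem totientWeight_apply (n : ℕ) :
    totientWeight n = (μ n : ℝ) ^ 2 / (n * n.totient) := by
  rw [totientWeight, pmul_apply, moebiusSqDivTotient_apply, natInv_apply]
  field_simp

theorem natInv_mul (a b : ℕ) : natInv (a * b) = natInv a * natInv b := by
  simp [natInv_apply, mul_comm]

theorem isMultiplicative_natInv : natInv.IsMultiplicative :=
  ⟨by simp [natInv_apply], fun {m n} _ => natInv_mul m n⟩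

theorem isMultiplicative_divTotient : divTotient.IsMultiplicative :=
  ⟨by simp [divTotient_apply], fun {m n} h => by
    simp only [divTotient_apply, Nat.totient_mul h, Nat.cast_mul]
    ring⟩

theorem isMultiplicative_moebiusSqDivTotient : moebiusSqDivTotient.IsMultiplicative :=
  ⟨by simp [moebiusSqDivTotient_apply], fun {m n} h => by
    simp only [moebiusSqDivTotient_apply, isMultiplicative_moebius.map_mul_of_coprime h,
      Nat.totient_mul h, Int.cast_mul, Nat.cast_mul]
    ring⟩

theorem isMultiplicative_totientWeight : totientWeight.IsMultiplicative :=
  isMultiplicative_moebiusSqDivTotient.pmul isMultiplicative_natInv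

theorem coe_zeta_mul_moebiusSqDivTotient :
    (ζ : ArithmeticFunction ℝ) * moebiusSqDivTotient = divTotient := by
  refine (IsMultiplicative.eq_iff_eq_on_prime_powers _
    (isMultiplicative_zeta.natCast.mul isMultiplicative_moebiusSqDivTotient) _
    isMultiplicative_divTotient).mpr fun p i hp => ?_
  rw [coe_zeta_mul_apply, Nat.sum_divisors_prime_pow hp]
  obtain _ | k := i
  · simp [moebiusSqDivTotient_apply, divTotient_apply]
  have h_nonsquarefree (j : ℕ) : moebiusSqDivTotient (p ^ (j + 1 + 1)) = 0 := by
    simp [moebiusSqDivTotient_apply, moebius_apply_prime_pow hp]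
  rw [sum_range_succ', sum_range_succ', sum_eq_zero fun j _ => h_nonsquarefree j]
  simp only [pow_zero, pow_one, zero_add, moebiusSqDivTotient_apply, divTotient_apply,
    moebius_apply_one, moebius_apply_prime hp, Nat.totient_one, Nat.totient_prime_pow_succ hp,
    Nat.totient_prime hp]
  have hp0 : (p : ℝ) ≠ 0 := by exact_mod_cast hp.ne_zero
  have hp1 : (p : ℝ) - 1 ≠ 0 := sub_ne_zero.mpr (by exact_mod_cast hp.one_lt.ne')
  push_cast [Nat.cast_sub hp.one_le]
  field_simp
  ring

theorem totientWeight_mul_natInv_apply (n : ℕ) :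
    (totientWeight * natInv) n = (n.totient : ℝ)⁻¹ := by
  have h_pmul : totientWeight * natInv = divTotient.pmul natInv := by
    rw [← coe_zeta_mul_moebiusSqDivTotient, mul_pmul_of_map_mul natInv_mul, zeta_pmul, mul_comm,
      totientWeight]
  rw [h_pmul, pmul_apply, divTotient_apply, natInv_apply]
  rcases eq_or_ne n 0 with rfl | hn
  · simp
  · field_simp

theorem sum_Icc_inv_totient (N : ℕ) :
    ∑ k ∈ Icc 1 N, (k.totient : ℝ)⁻¹ = ∑ d ∈ Icc 1 N, totientWeight d * harmonic (N / d) := by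
  have h_Icc (M : ℕ) : Icc 1 M = Ioc 0 M := Icc_add_one_left_eq_Ioc 0 M
  simp only [← totientWeight_mul_natInv_apply, h_Icc, sum_Ioc_mul_eq_sum_sum, harmonic_eq_sum_Icc]
  push_cast
  rfl

theorem totientWeight_nonneg (n : ℕ) : 0 ≤ totientWeight n := by
  rw [totientWeight_apply]; positivity

theorem totientWeight_le (n : ℕ) : totientWeight n ≤ 2 * ((n : ℝ) ^ (3 / 2 : ℝ))⁻¹ := by
  rw [totientWeight_apply]
  by_cases hn : Squarefree n
  · have hn0 : (0 : ℝ) < n := by exact_mod_cast Nat.pos_of_ne_zero hn.ne_zero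
    have ht0 : (0 : ℝ) < n.totient := by exact_mod_cast Nat.totient_pos.mpr hn.ne_zero.bot_lt
    have h_sqrt : √(n : ℝ) ≤ 2 * n.totient := by
      rw [Real.sqrt_le_left (by positivity)]
      calc (n : ℝ) ≤ 2 * n.totient ^ 2 := by
            exact_mod_cast Nat.le_two_mul_totient_sq_of_squarefree hn
        _ ≤ (2 * n.totient) ^ 2 := by nlinarith
    have h_rpow : (n : ℝ) ^ (3 / 2 : ℝ) = n * √n := by
      rw [Real.sqrt_eq_rpow, ← Real.rpow_one_add' hn0.le (by norm_num)]
      norm_num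
    rw [← Int.cast_pow, moebius_sq_eq_one_of_squarefree hn, h_rpow, ← div_eq_mul_inv, Int.cast_one,
      div_le_div_iff₀ (mul_pos hn0 ht0) (by positivity)]
    nlinarith
  · rw [moebius_eq_zero_of_not_squarefree hn, Int.cast_zero, zero_pow two_ne_zero, zero_div]
    positivity

theorem summable_totientWeight : Summable totientWeight :=
  Summable.of_nonneg_of_le totientWeight_nonneg totientWeight_le
    ((Real.summable_nat_rpow_inv.mpr (by norm_num)).mul_left 2)

theorem summable_totientWeight_mul_log : Summable fun n => totientWeight n * log n :=
  summable_mul_log_of_le_rpow_inv (by norm_num : (1 : ℝ) < 3 / 2) totientWeight_nonneg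
    totientWeight_le

theorem tsum_totientWeight_nonneg : 0 ≤ ∑' n, totientWeight n :=
  tsum_nonneg totientWeight_nonneg

theorem tsum_totientWeight_mul_log_nonneg : 0 ≤ ∑' n, totientWeight n * log n :=
  tsum_nonneg fun n => mul_nonneg (totientWeight_nonneg n) (log_natCast_nonneg n)

theorem sum_Icc_inv_totient_floor (x : ℝ) :
    ∑ k ∈ Icc 1 ⌊x⌋₊, (k.totient : ℝ)⁻¹ =
      ∑ d ∈ Icc 1 ⌊x⌋₊, totientWeight d * harmonic ⌊x / d⌋₊ := by
  simp only [sum_Icc_inv_totient, Nat.floor_div_natCast]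

theorem sum_Icc_inv_totient_le {x : ℝ} (hx : 1 ≤ x) :
    ∑ k ∈ Icc 1 ⌊x⌋₊, (k.totient : ℝ)⁻¹ ≤ (∑' n, totientWeight n) * (1 + log x) := by
  have h_harmonic : ∀ d ∈ Icc 1 ⌊x⌋₊, (harmonic ⌊x / d⌋₊ : ℝ) ≤ 1 + log x := by
    intro d hd
    obtain ⟨hd1, hdx⟩ := mem_Icc.mp hd
    have hd1' : (1 : ℝ) ≤ d := by exact_mod_cast hd1
    have hdx' : (d : ℝ) ≤ x := (Nat.le_floor_iff (by linarith)).mp hdx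
    calc (harmonic ⌊x / d⌋₊ : ℝ) ≤ 1 + log (x / d) :=
          harmonic_floor_le_one_add_log _ ((one_le_div (by linarith)).mpr hdx')
      _ ≤ 1 + log x := by gcongr; exact div_le_self (by linarith) hd1'
  rw [sum_Icc_inv_totient_floor]
  calc ∑ d ∈ Icc 1 ⌊x⌋₊, totientWeight d * harmonic ⌊x / d⌋₊
      ≤ ∑ d ∈ Icc 1 ⌊x⌋₊, totientWeight d * (1 + log x) :=
        sum_le_sum fun d hd => mul_le_mul_of_nonneg_left (h_harmonic d hd) (totientWeight_nonneg d)
    _ = (∑ d ∈ Icc 1 ⌊x⌋₊, totientWeight d) * (1 + log x) := (sum_mul ..).symm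
    _ ≤ (∑' n, totientWeight n) * (1 + log x) := by
        gcongr
        · linarith [log_nonneg hx]
        · exact summable_totientWeight.sum_le_tsum _ fun n _ => totientWeight_nonneg n

theorem tsum_mul_log_sub_le_sum_Icc_inv_totient {x : ℝ} (hx : 0 < x) :
    (∑' n, totientWeight n) * log x - ∑' n, totientWeight n * log n ≤
      ∑ k ∈ Icc 1 ⌊x⌋₊, (k.totient : ℝ)⁻¹ := by
  have h_vanish : ∀ d ∉ Icc 1 ⌊x⌋₊, totientWeight d * harmonic ⌊x / d⌋₊ = 0 := by
    intro d hd
    rcases Nat.eq_zero_or_pos d with rfl | hd0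
    · simp
    · have : ⌊x⌋₊ < d := by simp only [mem_Icc, not_and, not_le] at hd; exact hd hd0
      simp [Nat.floor_div_natCast, Nat.div_eq_of_lt this]
  have h_term (d : ℕ) : totientWeight d * log x ≤
      totientWeight d * harmonic ⌊x / d⌋₊ + totientWeight d * log d := by
    rcases Nat.eq_zero_or_pos d with rfl | hd0
    · simp
    have hd : (0 : ℝ) < d := by exact_mod_cast hd0
    rw [← mul_add]
    refine mul_le_mul_of_nonneg_left ?_ (totientWeight_nonneg d)
    have h_log := log_le_harmonic_floor _ (div_pos hx hd).le
    rw [Real.log_div hx.ne' hd.ne'] at h_log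
    linarith
  -- Extending the sum to all `d` adds only zero terms, and then `h_term` applies to every term.
  have h_finite : ∑ d ∈ Icc 1 ⌊x⌋₊, totientWeight d * harmonic ⌊x / d⌋₊ =
      ∑' d, totientWeight d * harmonic ⌊x / d⌋₊ := (tsum_eq_sum h_vanish).symm
  have h_summable : Summable fun d => totientWeight d * harmonic ⌊x / d⌋₊ :=
    summable_of_ne_finset_zero h_vanish
  rw [sum_Icc_inv_totient_floor, h_finite, ← tsum_mul_right, sub_le_iff_le_add,
    ← h_summable.tsum_add summable_totientWeight_mul_log]
  exact Summable.tsum_le_tsum h_term (summable_totientWeight.mul_right _)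
    (h_summable.add summable_totientWeight_mul_log)

theorem abs_sum_Icc_inv_totient_sub_mul_log_le {x : ℝ} (hx : 1 ≤ x) :
    |∑ k ∈ Icc 1 ⌊x⌋₊, (k.totient : ℝ)⁻¹ - (∑' n, totientWeight n) * log x| ≤
      (∑' n, totientWeight n) + ∑' n, totientWeight n * log n := by
  have h_upper := sum_Icc_inv_totient_le hx
  have h_lower := tsum_mul_log_sub_le_sum_Icc_inv_totient (by linarith : 0 < x)
  have hA := tsum_totientWeight_nonneg
  have hT := tsum_totientWeight_mul_log_nonneg
  rw [abs_sub_le_iff]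
  constructor <;> nlinarith

theorem tsum_totientWeight_prime_pow {p : ℕ} (hp : p.Prime) :
    ∑' e, totientWeight (p ^ e) = 1 + ((p : ℝ) * (p - 1))⁻¹ := by
  have h_vanish : ∀ e ∉ range 2, totientWeight (p ^ e) = 0 := by
    intro e he
    simp [totientWeight_apply, moebius_apply_prime_pow hp (by simp at he; omega : e ≠ 0),
      show e ≠ 1 by simp at he; omega]
  rw [tsum_eq_sum h_vanish]
  simp [sum_range_succ, totientWeight_apply, moebius_apply_prime hp, Nat.totient_prime hp,
    Nat.cast_sub hp.one_le]

theorem euler_factor_identity {q : ℝ} (hq : 1 < q) :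
    (1 - (q ^ 6)⁻¹)⁻¹ * (1 + (q * (q - 1))⁻¹) = (1 - (q ^ 2)⁻¹)⁻¹ * (1 - (q ^ 3)⁻¹)⁻¹ := by
  have h1 : q - 1 ≠ 0 := by linarith
  have h2 : q ^ 2 - 1 ≠ 0 := by nlinarith
  have h3 : q ^ 3 - 1 ≠ 0 := by nlinarith [one_lt_pow₀ hq (by norm_num : 3 ≠ 0)]
  have h6 : q ^ 6 - 1 ≠ 0 := by nlinarith [one_lt_pow₀ hq (by norm_num : 6 ≠ 0)]
  have hq0 : q ≠ 0 := by linarith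
  field_simp
  ring

theorem hasProd_totientWeight :
    HasProd (fun p : Nat.Primes => ((1 + ((p : ℝ) * (p - 1))⁻¹ : ℝ) : ℂ))
      (∑' n, totientWeight n : ℝ) := by
  have h_eq (p : Nat.Primes) : ((1 + ((p : ℝ) * (p - 1))⁻¹ : ℝ) : ℂ) =
      ∑' e, (totientWeight ((p : ℕ) ^ e) : ℂ) := by
    rw [← Complex.ofReal_tsum, tsum_totientWeight_prime_pow p.prop]
  simp only [h_eq, Complex.ofReal_tsum]
  refine EulerProduct.eulerProduct_hasProd (by simp [isMultiplicative_totientWeight.map_one])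
    (fun h => by simp [isMultiplicative_totientWeight.map_mul_of_coprime h]) ?_ (by simp)
  simpa [abs_of_nonneg (totientWeight_nonneg _)] using summable_totientWeight

theorem tsum_totientWeight_eq :
    ((∑' n, totientWeight n : ℝ) : ℂ) = riemannZeta 2 * riemannZeta 3 / riemannZeta 6 := by
  have h_zeta (s : ℕ) (hs : 1 < s) :
      HasProd (fun p : Nat.Primes => (((1 - ((p : ℝ) ^ s)⁻¹)⁻¹ : ℝ) : ℂ)) (riemannZeta s) := by
    convert riemannZeta_eulerProduct_hasProd (s := s) (by simpa using hs) using 2 with p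
    simp [Complex.cpow_neg, Complex.cpow_natCast]
  have h_factors := (h_zeta 6 (by norm_num)).mul hasProd_totientWeight
  simp only [← Complex.ofReal_mul,
    fun p : Nat.Primes => euler_factor_identity (Nat.one_lt_cast.mpr p.prop.one_lt)] at h_factors
  rw [eq_div_iff (riemannZeta_ne_zero_of_one_lt_re (by norm_num)), mul_comm]
  have h_rhs := (h_zeta 2 (by norm_num)).mul (h_zeta 3 (by norm_num))
  simp only [← Complex.ofReal_mul] at h_rhs
  exact_mod_cast h_factors.unique h_rhs

theorem tsum_one_div_nat_pow_three_le : ∑' n : ℕ, 1 / (n : ℝ) ^ 3 ≤ 29 / 24 := by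
  -- `1 / n³ ≤ 1 / ((n - 1) n (n + 1)) = g n - g (n + 1)` telescopes.
  have h := tsum_le_sum_range_add_of_le_sub (f := fun n : ℕ => 1 / (n : ℝ) ^ 3)
    (g := fun n : ℕ => 1 / (2 * ((n : ℝ) - 1) * n)) (M := 3) (fun n => by positivity) ?_ ?_
  · norm_num [sum_range_succ] at h ⊢
    linarith
  · intro n hn
    have : (3 : ℝ) ≤ n := by exact_mod_cast hn
    have : 0 < (n : ℝ) - 1 := by linarith
    positivity
  · intro n hn
    have : (3 : ℝ) ≤ n := by exact_mod_cast hn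
    have : 0 < (n : ℝ) - 1 := by linarith
    push_cast
    rw [add_sub_cancel_right, div_sub_div _ _ (by positivity) (by positivity),
      div_le_div_iff₀ (by positivity) (by positivity)]
    nlinarith

theorem le_tsum_one_div_nat_pow_six : 65 / 64 ≤ ∑' n : ℕ, 1 / (n : ℝ) ^ 6 :=
  calc (65 / 64 : ℝ) = ∑ n ∈ range 3, 1 / (n : ℝ) ^ 6 := by norm_num [sum_range_succ]
    _ ≤ _ := (Real.summable_one_div_nat_pow.mpr (by norm_num)).sum_le_tsum _
      fun n _ => by positivity

theorem tsum_totientWeight_lt_two : ∑' n, totientWeight n < 2 := by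
  have h := tsum_totientWeight_eq
  rw [riemannZeta_two, show (3 : ℂ) = (3 : ℕ) by norm_num, show (6 : ℂ) = (6 : ℕ) by norm_num,
    riemannZeta_natCast_eq_tsum (by norm_num), riemannZeta_natCast_eq_tsum (by norm_num)] at h
  have h_real : ∑' n, totientWeight n =
      π ^ 2 / 6 * (∑' n : ℕ, 1 / (n : ℝ) ^ 3) / ∑' n : ℕ, 1 / (n : ℝ) ^ 6 := by
    exact_mod_cast h
  have h3 := tsum_one_div_nat_pow_three_le
  have h6 := le_tsum_one_div_nat_pow_six
  have h3_nonneg : 0 ≤ ∑' n : ℕ, 1 / (n : ℝ) ^ 3 := tsum_nonneg fun n => by positivity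
  have hπ : π ^ 2 < 3.15 ^ 2 := pow_lt_pow_left₀ pi_lt_d2 pi_pos.le (by norm_num)
  rw [h_real, div_lt_iff₀ (by linarith)]
  nlinarith

theorem sum_one_div_totient_asymptotic :
    ∃ C₁ C₂ : ℝ, (C₁ : ℂ) = riemannZeta 2 * riemannZeta 3 / riemannZeta 6 ∧
      0 < C₂ ∧
      (∀ x : ℝ, 1 ≤ x →
        |(∑ k ∈ Finset.Icc 1 ⌊x⌋₊, (1 : ℝ) / (Nat.totient k)) - C₁ * Real.log x| < C₂) ∧
      C₁ < 2 ∧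
      ∃ X : ℝ, ∀ x : ℝ, X ≤ x →
        (∑ k ∈ Finset.Icc 1 ⌊x⌋₊, (1 : ℝ) / (Nat.totient k)) < 2 * Real.log x := by
  set A := ∑' n, totientWeight n
  set T := ∑' n, totientWeight n * log n
  have h_main : ∀ x : ℝ, 1 ≤ x →
      |(∑ k ∈ Icc 1 ⌊x⌋₊, (1 : ℝ) / (Nat.totient k)) - A * log x| < A + T + 1 := fun x hx => by
    simpa only [one_div] using (abs_sum_Icc_inv_totient_sub_mul_log_le hx).trans_lt
      (lt_add_one _)
  refine ⟨A, A + T + 1, tsum_totientWeight_eq, ?_, h_main, tsum_totientWeight_lt_two,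
    exists_forall_lt_mul_log tsum_totientWeight_lt_two h_main⟩
  linarith [tsum_totientWeight_nonneg, tsum_totientWeight_mul_log_nonneg]
end

section
/- For all real z ≥ 2, every positive integer q, and every integer a coprime to q: |π(z; q, a) − π(z)/φ(q)| ≤ 2 · sup_{2 ≤ t ≤ z} |θ(t; q, a) − θ(t)/φ(q)|. -/
/-- `π(z)`: the number of primes `p ≤ z`. -/
noncomputable def piCount (z : ℝ) : ℕ :=
  ((Finset.Icc 1 ⌊z⌋₊).filter Nat.Prime).card

/-- `π(z; q, a)`: the number of primes `p ≤ z` with `p ≡ a (mod q)`. -/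
noncomputable def piCountMod (z : ℝ) (q : ℕ) (a : ℤ) : ℕ :=
  ((Finset.Icc 1 ⌊z⌋₊).filter (fun p : ℕ => p.Prime ∧ (p : ℤ) % (q : ℤ) = a % (q : ℤ))).card

/-- `θ(t) = ∑_{p ≤ t} log p`. -/
noncomputable def thetaCheb (t : ℝ) : ℝ :=
  ∑ p ∈ (Finset.Icc 1 ⌊t⌋₊).filter Nat.Prime, Real.log p

/-- `θ(t; q, a) = ∑_{p ≤ t, p ≡ a (mod q)} log p`. -/
noncomputable def thetaChebMod (t : ℝ) (q : ℕ) (a : ℤ) : ℝ :=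
  ∑ p ∈ (Finset.Icc 1 ⌊t⌋₊).filter (fun p : ℕ => p.Prime ∧ (p : ℤ) % (q : ℤ) = a % (q : ℤ)),
    Real.log p

/-!
Both errors are sums over `k ≤ z` of the same discrepancy `d(k)`, weighted by `log k` for `θ` and
by `1` for `π`. Writing `d(k) = (d(k) log k) · (1 / log k)` and summing by parts against the
decreasing weight `1 / log k` (Abel's inequality), the `π`-error is at most `M / log 2`, where `M`
bounds the partial sums of `d(k) log k`, i.e. the `θ`-errors at the integers in `[2, z]`.
Since `log 2 > 1/2`, this is at most `2M`.
-/

open Finset Real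

section Abel

variable {c w : ℕ → ℝ} {m N : ℕ} {M : ℝ}

theorem abs_sum_Icc_mul_sub_mul_sum_le (hw : AntitoneOn w (Set.Ici m))
    (hc : ∀ n ∈ Icc m N, |∑ k ∈ Icc m n, c k| ≤ M) (hmN : m ≤ N) :
    |∑ k ∈ Icc m N, c k * w k - w N * ∑ k ∈ Icc m N, c k| ≤ M * (w m - w N) := by
  induction N, hmN using Nat.le_induction with
  | base => simp [mul_comm]
  | succ n hmn ih =>
    have hc_n : |∑ k ∈ Icc m n, c k| ≤ M := hc n (mem_Icc.2 ⟨hmn, n.le_succ⟩)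
    have hw_n : w (n + 1) ≤ w n :=
      hw (Set.mem_Ici.2 hmn) (Set.mem_Ici.2 (hmn.trans n.le_succ)) n.le_succ
    have ih := ih fun k hk => hc k (mem_Icc.2 ⟨(mem_Icc.1 hk).1, (mem_Icc.1 hk).2.trans n.le_succ⟩)
    rw [sum_Icc_succ_top (hmn.trans n.le_succ), sum_Icc_succ_top (hmn.trans n.le_succ)]
    calc |∑ k ∈ Icc m n, c k * w k + c (n + 1) * w (n + 1)
            - w (n + 1) * (∑ k ∈ Icc m n, c k + c (n + 1))|
        = |(∑ k ∈ Icc m n, c k * w k - w n * ∑ k ∈ Icc m n, c k)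
            + (w n - w (n + 1)) * ∑ k ∈ Icc m n, c k| := by congr 1; ring
      _ ≤ M * (w m - w n) + (w n - w (n + 1)) * M := by
        refine (abs_add_le _ _).trans (add_le_add ih ?_)
        rw [abs_mul, abs_of_nonneg (sub_nonneg.2 hw_n)]
        exact mul_le_mul_of_nonneg_left hc_n (sub_nonneg.2 hw_n)
      _ = M * (w m - w (n + 1)) := by ring

/-- Abel's inequality. -/
theorem abs_sum_Icc_mul_le_of_antitoneOn (hw : AntitoneOn w (Set.Ici m)) (hwN : 0 ≤ w N)
    (hc : ∀ n ∈ Icc m N, |∑ k ∈ Icc m n, c k| ≤ M) (hmN : m ≤ N) :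
    |∑ k ∈ Icc m N, c k * w k| ≤ M * w m := by
  have hc_N : |∑ k ∈ Icc m N, c k| ≤ M := hc N (mem_Icc.2 ⟨hmN, le_rfl⟩)
  have h_tail : |w N * ∑ k ∈ Icc m N, c k| ≤ w N * M := by
    rw [abs_mul, abs_of_nonneg hwN]
    exact mul_le_mul_of_nonneg_left hc_N hwN
  linarith [abs_sub_abs_le_abs_sub (∑ k ∈ Icc m N, c k * w k) (w N * ∑ k ∈ Icc m N, c k),
    abs_sum_Icc_mul_sub_mul_sum_le hw hc hmN]

end Abel

theorem sum_Icc_one_eq_sum_Icc_two {β : Type*} [AddCommMonoid β] {f : ℕ → β} (hf : f 1 = 0)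
    (N : ℕ) : ∑ k ∈ Icc 1 N, f k = ∑ k ∈ Icc 2 N, f k := by
  refine (sum_subset (Icc_subset_Icc_left one_le_two) fun k hk hk' => ?_).symm
  rw [show k = 1 by simp only [mem_Icc] at hk hk'; omega, hf]

theorem le_sSup_image_floor (g : ℕ → ℝ) {x y : ℝ} {n : ℕ} (hxn : x ≤ n) (hny : (n : ℝ) ≤ y) :
    g n ≤ sSup ((fun t => g ⌊t⌋₊) '' Set.Icc x y) := by
  have hbdd : BddAbove ((fun t => g ⌊t⌋₊) '' Set.Icc x y) := by
    refine (((Set.finite_Iic ⌊y⌋₊).image g).subset ?_).bddAbove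
    rintro _ ⟨t, ht, rfl⟩
    exact ⟨⌊t⌋₊, Nat.floor_mono ht.2, rfl⟩
  exact le_csSup_of_le hbdd ⟨n, ⟨hxn, hny⟩, rfl⟩ (by simp only [Nat.floor_natCast, le_rfl])

noncomputable def primeDiscrepancy (q : ℕ) (a : ℤ) (k : ℕ) : ℝ :=
  (if k.Prime ∧ (k : ℤ) % q = a % q then 1 else 0) - (if k.Prime then 1 else 0) / (q.totient : ℝ)

theorem piCountMod_sub_piCount_div_totient (z : ℝ) (q : ℕ) (a : ℤ) :
    (piCountMod z q a : ℝ) - piCount z / q.totient = ∑ k ∈ Icc 1 ⌊z⌋₊, primeDiscrepancy q a k := by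
  simp only [primeDiscrepancy, piCountMod, piCount]
  rw [sum_sub_distrib, ← sum_div, sum_boole, sum_boole]

theorem thetaChebMod_sub_thetaCheb_div_totient (t : ℝ) (q : ℕ) (a : ℤ) :
    thetaChebMod t q a - thetaCheb t / q.totient =
      ∑ k ∈ Icc 1 ⌊t⌋₊, primeDiscrepancy q a k * log k := by
  simp only [primeDiscrepancy, thetaChebMod, thetaCheb, sub_mul, div_mul_eq_mul_div, ite_mul,
    one_mul, zero_mul]
  rw [sum_sub_distrib, ← sum_div, sum_filter, sum_filter]

theorem primeDiscrepancy_mul_log_mul_inv_log (q : ℕ) (a : ℤ) (k : ℕ) :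
    primeDiscrepancy q a k * log k * (log k)⁻¹ = primeDiscrepancy q a k := by
  by_cases hk : k.Prime
  · have hlog : log k ≠ 0 := (log_pos (by exact_mod_cast hk.one_lt)).ne'
    field_simp
  · simp [primeDiscrepancy, hk]

theorem primeDiscrepancy_one (q : ℕ) (a : ℤ) : primeDiscrepancy q a 1 = 0 := by
  simp [primeDiscrepancy, Nat.not_prime_one]

theorem antitoneOn_inv_log_natCast : AntitoneOn (fun k : ℕ => (log k)⁻¹) (Set.Ici 2) :=
  fun j hj k _ hjk => by
    have hj : (1 : ℝ) < j := by exact_mod_cast (Set.mem_Ici.1 hj)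
    exact inv_anti₀ (log_pos hj) (log_le_log (by linarith) (by exact_mod_cast hjk))

theorem pi_error_le_two_mul_sup_theta_error_general
    (z : ℝ) (hz : 2 ≤ z) (q : ℕ) (a : ℤ) :
    |(piCountMod z q a : ℝ) - (piCount z : ℝ) / (Nat.totient q)| ≤
      2 * sSup ((fun t => |thetaChebMod t q a - thetaCheb t / (Nat.totient q)|) ''
        Set.Icc 2 z) := by
  simp only [piCountMod_sub_piCount_div_totient, thetaChebMod_sub_thetaCheb_div_totient]
  set d := primeDiscrepancy q a
  set M := sSup ((fun t => |∑ k ∈ Icc 1 ⌊t⌋₊, d k * log k|) '' Set.Icc 2 z)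
  have hN : 2 ≤ ⌊z⌋₊ := Nat.le_floor (by exact_mod_cast hz)
  have hθ : ∀ n ∈ Icc 2 ⌊z⌋₊, |∑ k ∈ Icc 2 n, d k * log k| ≤ M := fun n hn => by
    rw [← sum_Icc_one_eq_sum_Icc_two (by simp)]
    exact le_sSup_image_floor (fun n => |∑ k ∈ Icc 1 n, d k * log k|)
      (by exact_mod_cast (mem_Icc.1 hn).1) ((Nat.cast_le.2 (mem_Icc.1 hn).2).trans
        (Nat.floor_le (by linarith)))
  have hM : 0 ≤ M := (abs_nonneg _).trans (hθ 2 (mem_Icc.2 ⟨le_rfl, hN⟩))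
  have hlog2 : (log 2)⁻¹ ≤ 2 := inv_le_of_inv_le₀ (by norm_num) (by linarith [log_two_gt_d9])
  calc |∑ k ∈ Icc 1 ⌊z⌋₊, d k|
      = |∑ k ∈ Icc 2 ⌊z⌋₊, d k * log k * (log k)⁻¹| := by
        rw [sum_Icc_one_eq_sum_Icc_two (primeDiscrepancy_one q a)]
        simp only [d, primeDiscrepancy_mul_log_mul_inv_log]
    _ ≤ M * (log (2 : ℕ))⁻¹ := abs_sum_Icc_mul_le_of_antitoneOn antitoneOn_inv_log_natCast
        (inv_nonneg.2 (log_natCast_nonneg _)) hθ hN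
    _ ≤ 2 * M := by rw [Nat.cast_ofNat, mul_comm]; exact mul_le_mul_of_nonneg_right hlog2 hM

theorem pi_error_le_two_mul_sup_theta_error
    (z : ℝ) (hz : 2 ≤ z) (q : ℕ) (hq : 0 < q) (a : ℤ) (ha : IsCoprime a (q : ℤ)) :
    |(piCountMod z q a : ℝ) - (piCount z : ℝ) / (Nat.totient q)| ≤
      2 * sSup ((fun t => |thetaChebMod t q a - thetaCheb t / (Nat.totient q)|) ''
        Set.Icc 2 z) :=
  pi_error_le_two_mul_sup_theta_error_general z hz q a
end

section
/- Let L be a positive integer, let d₁, …, d_M be integers, and let a be an integer such that for every prime p dividing L and every i, p does not divide d_i·a + 1. Then the set of linear forms n ↦ (d_i·L)·n + (d_i·a + 1), 1 ≤ i ≤ M, is admissible; that is, for every prime p there exists an integer n such that p does not divide ∏_{i=1}^{M} ((d_i·L)·n + (d_i·a + 1)). -/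
/-- If for every prime `p ∣ L` and every `i` we have `p ∤ d_i a + 1`, then the set of
linear forms `n ↦ (d_i L) n + (d_i a + 1)` is admissible. -/
theorem linear_forms_admissible (L : ℕ) (hL : 0 < L) (M : ℕ) (d : Fin M → ℤ) (a : ℤ)
    (h : ∀ p : ℕ, p.Prime → (p : ℤ) ∣ (L : ℤ) → ∀ i, ¬ (p : ℤ) ∣ d i * a + 1) :
    ∀ p : ℕ, p.Prime →
      ∃ n : ℤ, ¬ (p : ℤ) ∣ ∏ i, ((d i * (L : ℤ)) * n + (d i * a + 1)) := by
  intro p hp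
  haveI : Fact p.Prime := ⟨hp⟩
  by_cases hpL : (p : ℤ) ∣ (L : ℤ)
  · refine ⟨0, fun hdvd => ?_⟩
    rw [Prime.dvd_finset_prod_iff (Int.prime_iff_natAbs_prime.mpr (by simpa using hp))] at hdvd
    obtain ⟨i, -, hi⟩ := hdvd
    simp only [mul_zero, zero_add] at hi
    exact h p hp hpL i hi
  · have hLne : (L : ZMod p) ≠ 0 := fun hd => hpL (by
      rw [Int.natCast_dvd_natCast]
      exact (ZMod.natCast_eq_zero_iff L p).mp hd)
    set n : ZMod p := (-a : ZMod p) * (L : ZMod p)⁻¹ with hn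
    refine ⟨(n.val : ℤ), fun hdvd => ?_⟩
    rw [← ZMod.intCast_zmod_eq_zero_iff_dvd] at hdvd
    push_cast at hdvd
    rw [Finset.prod_eq_zero_iff] at hdvd
    obtain ⟨i, -, hi⟩ := hdvd
    have hv : ((n.val : ℕ) : ZMod p) = n := by simp [ZMod.natCast_val, ZMod.cast_id]
    have key : (L : ZMod p) * n = -a := by
      rw [hn, mul_comm, mul_assoc, inv_mul_cancel₀ hLne, mul_one]
    apply one_ne_zero (α := ZMod p)
    rw [← hi, hv, mul_assoc, key]
    ring
end

section
/- Let M ≥ 2 be an integer. There exists a real Y₀ (depending on M) such that the following holds for all real Y ≥ Y₀. Let S be a set of M positive integers, each at most Y, such that for all distinct d, d' ∈ S one has |log d − log d'| > 1. Let V and W be reals with V ≤ √Y and 1 ≤ W ≤ V/(log Y)^{M+5}. Then the number of integers k with Y ≤ k < 2Y for which there exist distinct d, d' ∈ S, a real ω with |ω| < W, and nonzero integers m, m' with |ω·log(d·k+1) − m| ≤ 1/V and |ω·log(d'·k+1) − m'| ≤ 1/V, is at most 1200·binomial(M,2)·(W/V)·Y·(log Y)^4. -/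
/-!
Eliminating `ω` from `|ω log (d k + 1) - m| ≤ 1/V` and `|ω log (d' k + 1) - m'| ≤ 1/V` shows
that `m'` lies within `4/V` of `m g(k)`, where `g(t) = log (d' t + 1) / log (d t + 1)`, and that
`0 < |m| ≤ 4 W log Y`, `|m'| ≤ 3|m| + 1`. Since `log d` and `log d'` are more than `1` apart,
`g` moves by at least `(t₂ - t₁) / (45 Y log² Y)` between `t₁ ≤ t₂` in `[Y, 2Y]`, so for fixed
`d, d', m, m'` the admissible `k` lie in an interval of length `O(Y log² Y / (V |m|))`. Summing
over the `O(|m|)` values of `m'`, the `O(W log Y)` values of `m` and the `M(M - 1)` pairs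
`(d, d')` gives the bound.
-/

open Real Finset

lemma log_sub_log_le_div {p q : ℝ} (hp : 0 < p) (hpq : p ≤ q) :
    log q - log p ≤ (q - p) / p := by
  have h := log_le_sub_one_of_pos (div_pos (hp.trans_le hpq) hp)
  rw [log_div (hp.trans_le hpq).ne' hp.ne'] at h
  rwa [sub_div, div_self hp.ne']

lemma div_le_log_sub_log {p q : ℝ} (hp : 0 < p) (hpq : p ≤ q) :
    (q - p) / q ≤ log q - log p := by
  have hq := hp.trans_le hpq
  have h := one_sub_inv_le_log_of_pos (div_pos hq hp)
  rwa [log_div hq.ne' hp.ne', inv_div, one_sub_div hq.ne'] at h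

lemma log_le_log_mul_add_one_le_three_mul {Y e t : ℝ} (hY : 3 ≤ Y) (he : 1 ≤ e) (heY : e ≤ Y)
    (ht : Y ≤ t) (ht' : t ≤ 2 * Y) :
    log Y ≤ log (e * t + 1) ∧ log (e * t + 1) ≤ 3 * log Y := by
  have het : t ≤ e * t := le_mul_of_one_le_left (by linarith) he
  refine ⟨log_le_log (by linarith) (by linarith), ?_⟩
  have hcube : e * t + 1 ≤ Y ^ 3 := by
    nlinarith [mul_le_mul heY ht' (by linarith) (by linarith),
      mul_nonneg (sq_nonneg Y) (show (0 : ℝ) ≤ Y - 3 by linarith)]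
  calc log (e * t + 1) ≤ log (Y ^ 3) := log_le_log (by linarith) hcube
    _ = 3 * log Y := by rw [log_pow]; norm_num

lemma log_mul_add_one_sub_log_drop {e t₁ t₂ : ℝ} (he : 0 ≤ e) (ht₁ : 0 < t₁) (ht : t₁ ≤ t₂) :
    0 ≤ (log (e * t₁ + 1) - log t₁) - (log (e * t₂ + 1) - log t₂) ∧
      (log (e * t₁ + 1) - log t₁) - (log (e * t₂ + 1) - log t₂) ≤
        (t₂ - t₁) / (t₁ * (e * t₂ + 1)) := by
  have ht₂ : 0 < t₂ := ht₁.trans_le ht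
  have hp : 0 < t₁ * (e * t₂ + 1) := by positivity
  have hpq : t₁ * (e * t₂ + 1) ≤ t₂ * (e * t₁ + 1) := by nlinarith
  have hdrop : (log (e * t₁ + 1) - log t₁) - (log (e * t₂ + 1) - log t₂) =
      log (t₂ * (e * t₁ + 1)) - log (t₁ * (e * t₂ + 1)) := by
    rw [log_mul ht₁.ne' (by positivity), log_mul ht₂.ne' (by positivity)]; ring
  rw [hdrop]
  refine ⟨sub_nonneg.2 (log_le_log hp hpq), (log_sub_log_le_div hp hpq).trans_eq ?_⟩
  congr 1; ring

lemma half_le_abs_log_mul_add_one_sub {d d' t : ℝ} (hd : 1 ≤ d) (hd' : 1 ≤ d') (ht : 2 ≤ t)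
    (hdd' : 1 < |log d - log d'|) :
    1 / 2 ≤ |log (d * t + 1) - log (d' * t + 1)| := by
  have hgap : ∀ e : ℝ, 1 ≤ e → 0 ≤ log (e * t + 1) - log (e * t) ∧
      log (e * t + 1) - log (e * t) ≤ 1 / 2 := fun e he => by
    have het : 2 ≤ e * t := by nlinarith
    refine ⟨sub_nonneg.2 (log_le_log (by linarith) (by linarith)),
      (log_sub_log_le_div (by linarith) (by linarith)).trans ?_⟩
    rw [add_sub_cancel_left, div_le_div_iff₀ (by linarith) (by norm_num)]; linarith
  obtain ⟨h₀, h₁⟩ := hgap d hd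
  obtain ⟨h₀', h₁'⟩ := hgap d' hd'
  have hsplit : log d - log d' = (log (d * t + 1) - log (d' * t + 1)) -
      ((log (d * t + 1) - log (d * t)) - (log (d' * t + 1) - log (d' * t))) := by
    rw [log_mul (by linarith) (by linarith), log_mul (by linarith) (by linarith)]; ring
  rw [hsplit] at hdd'
  linarith [abs_sub _ _ |>.trans' hdd'.le, abs_sub_le_of_nonneg_of_le h₀ h₁ h₀' h₁']

noncomputable def logRatio (d d' t : ℝ) : ℝ := log (d' * t + 1) / log (d * t + 1)

section Separation

variable {Y d d' t₁ t₂ : ℝ}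

lemma div_le_abs_log_cross (hY : 3 ≤ Y) (hYlog : 60 * log Y ≤ Y)
    (hd : 1 ≤ d) (hd' : 1 ≤ d') (hdY : d ≤ Y) (hd'Y : d' ≤ Y) (hdd' : 1 < |log d - log d'|)
    (ht₁ : Y ≤ t₁) (ht : t₁ ≤ t₂) (ht₂ : t₂ ≤ 2 * Y) :
    (t₂ - t₁) / (5 * Y) ≤
      |log (d' * t₂ + 1) * log (d * t₁ + 1) - log (d * t₂ + 1) * log (d' * t₁ + 1)| := by
  have hdrop : ∀ e, 1 ≤ e → 0 ≤ (log (e * t₁ + 1) - log t₁) - (log (e * t₂ + 1) - log t₂) ∧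
      (log (e * t₁ + 1) - log t₁) - (log (e * t₂ + 1) - log t₂) ≤ (t₂ - t₁) / Y ^ 2 :=
    fun e he => by
      obtain ⟨h₀, h₁⟩ := log_mul_add_one_sub_log_drop (by linarith) (by linarith) ht
      refine ⟨h₀, h₁.trans (div_le_div_of_nonneg_left (by linarith) (by positivity) ?_)⟩
      rw [sq]
      exact mul_le_mul ht₁ (by nlinarith) (by linarith) (by linarith)
  obtain ⟨hu₀, hu₁⟩ := hdrop d hd
  obtain ⟨hu₀', hu₁'⟩ := hdrop d' hd'
  obtain ⟨hL₁, hL₁3⟩ := log_le_log_mul_add_one_le_three_mul hY hd hdY ht₁ (by linarith)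
  obtain ⟨hL₁', hL₁3'⟩ := log_le_log_mul_add_one_le_three_mul hY hd' hd'Y ht₁ (by linarith)
  have hx : 0 < log Y := log_pos (by linarith)
  set L₁ := log (d * t₁ + 1)
  set L₁' := log (d' * t₁ + 1)
  set u := (L₁ - log t₁) - (log (d * t₂ + 1) - log t₂)
  set u' := (L₁' - log t₁) - (log (d' * t₂ + 1) - log t₂)
  set A := log t₂ - log t₁
  -- the main term `A (L₁ - L₁')` is `≍ (t₂ - t₁) / Y`, the error is `O((t₂ - t₁) log Y / Y²)`
  have hcross : log (d' * t₂ + 1) * L₁ - log (d * t₂ + 1) * L₁' =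
      A * (L₁ - L₁') - (u' * L₁ - u * L₁') := by ring
  have hA : (t₂ - t₁) / (2 * Y) ≤ A :=
    (div_le_div_of_nonneg_left (by linarith) (by linarith) ht₂).trans
      (div_le_log_sub_log (by linarith) ht)
  have hsep : 1 / 2 ≤ |L₁ - L₁'| := half_le_abs_log_mul_add_one_sub hd hd' (by linarith) hdd'
  have hδ : 0 ≤ t₂ - t₁ := by linarith
  have herr : |u' * L₁ - u * L₁'| ≤ (t₂ - t₁) / Y ^ 2 * (3 * log Y) :=
    abs_sub_le_of_nonneg_of_le (mul_nonneg hu₀' (by linarith))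
      (mul_le_mul hu₁' hL₁3 (by linarith) (by positivity))
      (mul_nonneg hu₀ (by linarith)) (mul_le_mul hu₁ hL₁3' (by linarith) (by positivity))
  have hA₀ : 0 ≤ A := (div_nonneg hδ (by linarith)).trans hA
  have hmain : (t₂ - t₁) / (2 * Y) * (1 / 2) ≤ |A * (L₁ - L₁')| := by
    rw [abs_mul, abs_of_nonneg hA₀]
    exact mul_le_mul hA hsep (by norm_num) hA₀
  have hsmall : (t₂ - t₁) / Y ^ 2 * (3 * log Y) ≤ (t₂ - t₁) / (20 * Y) := by
    rw [div_mul_eq_mul_div, div_le_div_iff₀ (by positivity) (by positivity)]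
    have := mul_le_mul_of_nonneg_left hYlog (by nlinarith : (0:ℝ) ≤ (t₂ - t₁) * Y)
    nlinarith
  rw [hcross]
  calc (t₂ - t₁) / (5 * Y) = (t₂ - t₁) / (2 * Y) * (1 / 2) - (t₂ - t₁) / (20 * Y) := by
        field_simp; ring
    _ ≤ |A * (L₁ - L₁')| - |u' * L₁ - u * L₁'| := by linarith
    _ ≤ _ := abs_sub_abs_le_abs_sub _ _

lemma div_le_abs_logRatio_sub (hY : 3 ≤ Y) (hYlog : 60 * log Y ≤ Y)
    (hd : 1 ≤ d) (hd' : 1 ≤ d') (hdY : d ≤ Y) (hd'Y : d' ≤ Y) (hdd' : 1 < |log d - log d'|)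
    (ht₁ : Y ≤ t₁) (ht : t₁ ≤ t₂) (ht₂ : t₂ ≤ 2 * Y) :
    (t₂ - t₁) / (45 * Y * log Y ^ 2) ≤ |logRatio d d' t₂ - logRatio d d' t₁| := by
  have hcross := div_le_abs_log_cross hY hYlog hd hd' hdY hd'Y hdd' ht₁ ht ht₂
  obtain ⟨hL₁, hL₁3⟩ := log_le_log_mul_add_one_le_three_mul hY hd hdY ht₁ (by linarith)
  obtain ⟨hL₂, hL₂3⟩ := log_le_log_mul_add_one_le_three_mul hY hd hdY (ht₁.trans ht) ht₂
  have hx : 0 < log Y := log_pos (by linarith)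
  have hL : log (d * t₂ + 1) * log (d * t₁ + 1) ≤ 9 * log Y ^ 2 := by nlinarith
  have hLpos : 0 < log (d * t₂ + 1) * log (d * t₁ + 1) := mul_pos (by linarith) (by linarith)
  rw [logRatio, logRatio, div_sub_div _ _ (by linarith) (by linarith), abs_div, abs_of_pos hLpos]
  calc (t₂ - t₁) / (45 * Y * log Y ^ 2) = (t₂ - t₁) / (5 * Y) / (9 * log Y ^ 2) := by
        field_simp; ring
    _ ≤ _ / (9 * log Y ^ 2) := div_le_div_of_nonneg_right hcross (by positivity)
    _ ≤ _ := div_le_div_of_nonneg_left (abs_nonneg _) hLpos hL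

end Separation

lemma card_le_of_forall_sub_le {T : Finset ℕ} {l : ℝ} (hl : 0 ≤ l)
    (h : ∀ a ∈ T, ∀ b ∈ T, (a : ℝ) - b ≤ l) : (#T : ℝ) ≤ l + 1 := by
  rcases T.eq_empty_or_nonempty with rfl | hT
  · simp only [card_empty, Nat.cast_zero]; linarith
  set a := T.min' hT
  have hsub : T ⊆ Icc a (a + ⌊l⌋₊) := fun k hk => by
    have hak : a ≤ k := T.min'_le k hk
    refine mem_Icc.2 ⟨hak, ?_⟩
    have : k - a ≤ ⌊l⌋₊ := Nat.le_floor (by push_cast [hak]; exact h k hk a (T.min'_mem hT))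
    omega
  calc (#T : ℝ) ≤ #(Icc a (a + ⌊l⌋₊)) := by exact_mod_cast card_le_card hsub
    _ = ⌊l⌋₊ + 1 := by rw [Nat.card_Icc, show a + ⌊l⌋₊ + 1 - a = ⌊l⌋₊ + 1 by omega]; push_cast; rfl
    _ ≤ l + 1 := by linarith [Nat.floor_le hl]

lemma cast_card_biUnion_le_card_mul {ι β : Type*} [DecidableEq β] {s : Finset ι}
    {t : ι → Finset β} {c : ℝ} (h : ∀ i ∈ s, (#(t i) : ℝ) ≤ c) :
    (#(s.biUnion t) : ℝ) ≤ #s * c :=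
  calc (#(s.biUnion t) : ℝ) ≤ ∑ i ∈ s, (#(t i) : ℝ) := by exact_mod_cast card_biUnion_le
    _ ≤ #s * c := by simpa using sum_le_card_nsmul s _ c h

lemma cast_card_Icc_neg_self {n : ℤ} (hn : 0 ≤ n) : (#(Icc (-n) n) : ℝ) = 2 * n + 1 := by
  have h := Int.card_Icc_of_le (a := -n) (b := n) (by linarith)
  rw [show n + 1 - -n = 2 * n + 1 by ring] at h
  exact_mod_cast h

lemma cast_card_offDiag {α : Type*} [DecidableEq α] (s : Finset α) :
    (#s.offDiag : ℝ) = 2 * (#s).choose 2 := by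
  rw [offDiag_card, Nat.cast_sub (Nat.le_mul_self _), Nat.cast_choose_two]
  push_cast; ring

noncomputable def ratioHits (Y η d d' : ℝ) (m m' : ℤ) : Finset ℕ :=
  (Ico ⌈Y⌉₊ ⌈2 * Y⌉₊).filter fun k => |(m' : ℝ) - m * logRatio d d' k| ≤ η

lemma card_ratioHits_le {Y η d d' : ℝ} {m : ℤ} (m' : ℤ) (hY : 3 ≤ Y) (hYlog : 60 * log Y ≤ Y)
    (hd : 1 ≤ d) (hd' : 1 ≤ d') (hdY : d ≤ Y) (hd'Y : d' ≤ Y) (hdd' : 1 < |log d - log d'|)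
    (hη : 0 ≤ η) (hm : m ≠ 0) :
    (#(ratioHits Y η d d' m m') : ℝ) ≤ 90 * η * Y * log Y ^ 2 / |(m : ℝ)| + 1 := by
  have hm₀ : 0 < |(m : ℝ)| := abs_pos.2 (Int.cast_ne_zero.2 hm)
  have hx : 0 < log Y := log_pos (by linarith)
  refine card_le_of_forall_sub_le (by positivity) fun a ha b hb => ?_
  simp only [ratioHits, mem_filter, mem_Ico, Nat.ceil_le, Nat.lt_ceil] at ha hb
  rcases le_total (a : ℝ) b with hab | hba
  · have : 0 ≤ 90 * η * Y * log Y ^ 2 / |(m : ℝ)| := by positivity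
    linarith
  have hsep := div_le_abs_logRatio_sub hY hYlog hd hd' hdY hd'Y hdd' hb.1.1 hba ha.1.2.le
  have hclose : |(m : ℝ)| * |logRatio d d' a - logRatio d d' b| ≤ 2 * η := by
    rw [← abs_mul, mul_sub]
    calc _ = |-((m' : ℝ) - m * logRatio d d' a) + ((m' : ℝ) - m * logRatio d d' b)| := by
          ring_nf
      _ ≤ η + η := (abs_add_le _ _).trans (by rw [abs_neg]; exact add_le_add ha.2 hb.2)
      _ = 2 * η := by ring
  rw [le_div_iff₀ hm₀]
  rw [div_le_iff₀ (by positivity)] at hsep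
  nlinarith [mul_le_mul_of_nonneg_left hsep hm₀.le,
    mul_le_mul_of_nonneg_right hclose (by positivity : (0:ℝ) ≤ 45 * Y * log Y ^ 2)]

noncomputable def clusterCover (Y η : ℝ) (B : ℕ) (S : Finset ℕ) : Finset ℕ :=
  S.offDiag.biUnion fun p => ((Icc (-(B : ℤ)) B).erase 0).biUnion fun m =>
    (Icc (-(3 * |m| + 1)) (3 * |m| + 1)).biUnion fun m' => ratioHits Y η p.1 p.2 m m'

lemma card_clusterCover_le {Y η : ℝ} {B : ℕ} {S : Finset ℕ} (hY : 3 ≤ Y)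
    (hYlog : 60 * log Y ≤ Y) (hη : 0 ≤ η) (hS : ∀ d ∈ S, 0 < d ∧ (d : ℝ) ≤ Y)
    (hspread : ∀ d ∈ S, ∀ d' ∈ S, d ≠ d' → 1 < |log d - log d'|) :
    (#(clusterCover Y η B S) : ℝ) ≤
      #S.offDiag * (2 * B * (810 * η * Y * log Y ^ 2 + 9 * B)) := by
  refine cast_card_biUnion_le_card_mul fun p hp => ?_
  obtain ⟨hd, hd', hdd'⟩ := mem_offDiag.1 hp
  have hd₁ : (1 : ℝ) ≤ p.1 := by exact_mod_cast (hS _ hd).1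
  have hd₁' : (1 : ℝ) ≤ p.2 := by exact_mod_cast (hS _ hd').1
  have hcard : #((Icc (-(B : ℤ)) B).erase 0) = 2 * (B : ℝ) := by
    rw [card_erase_of_mem (by simp), Nat.cast_sub (card_pos.2 ⟨0, by simp⟩),
      cast_card_Icc_neg_self (by positivity)]
    push_cast; ring
  rw [← hcard]
  refine cast_card_biUnion_le_card_mul fun m hm => ?_
  obtain ⟨hm₀, hmB⟩ := mem_erase.1 hm
  have hm₁ : 1 ≤ |(m : ℝ)| := by exact_mod_cast Int.one_le_abs hm₀
  have hmB' : |(m : ℝ)| ≤ B := by exact_mod_cast abs_le.2 (mem_Icc.1 hmB)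
  have hm' : (#(Icc (-(3 * |m| + 1)) (3 * |m| + 1)) : ℝ) ≤ 9 * |(m : ℝ)| := by
    rw [cast_card_Icc_neg_self (by positivity)]; push_cast; linarith
  refine (cast_card_biUnion_le_card_mul fun m' _ => card_ratioHits_le m' hY hYlog hd₁ hd₁'
    (hS _ hd).2 (hS _ hd').2 (hspread _ hd _ hd' hdd') hη hm₀).trans ?_
  calc _ ≤ 9 * |(m : ℝ)| * (90 * η * Y * log Y ^ 2 / |(m : ℝ)| + 1) :=
        mul_le_mul_of_nonneg_right hm' (by positivity)
    _ = 810 * η * Y * log Y ^ 2 + 9 * |(m : ℝ)| := by field_simp; ring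
    _ ≤ _ := by linarith

lemma abs_sub_mul_div_le_of_abs_sub_le {ω L L' m m' η c : ℝ} (hL : 0 < L) (hL' : 0 ≤ L')
    (hc : L' ≤ c * L) (h : |ω * L - m| ≤ η) (h' : |ω * L' - m'| ≤ η) :
    |m' - m * (L' / L)| ≤ (1 + c) * η := by
  have hq : 0 ≤ L' / L := div_nonneg hL' hL.le
  have hqc : L' / L ≤ c := (div_le_iff₀ hL).2 hc
  have hsplit : m' - m * (L' / L) = -(ω * L' - m') + (ω * L - m) * (L' / L) := by
    field_simp; ring
  calc |m' - m * (L' / L)| ≤ |-(ω * L' - m')| + |(ω * L - m) * (L' / L)| := by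
        rw [hsplit]; exact abs_add_le _ _
    _ = |ω * L' - m'| + |ω * L - m| * (L' / L) := by rw [abs_neg, abs_mul, abs_of_nonneg hq]
    _ ≤ η + η * c := add_le_add h' (mul_le_mul h hqc hq ((abs_nonneg _).trans h))
    _ = (1 + c) * η := by ring

lemma mem_clusterCover {S : Finset ℕ} {Y V W ω : ℝ} {k d d' : ℕ} {m m' : ℤ}
    (hY : 3 ≤ Y) (hV : 4 ≤ V) (hW : 1 ≤ W) (hS : ∀ d ∈ S, 0 < d ∧ (d : ℝ) ≤ Y)
    (hk : Y ≤ k) (hk' : (k : ℝ) < 2 * Y) (hd : d ∈ S) (hd' : d' ∈ S) (hdd' : d ≠ d')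
    (hω : |ω| < W) (hm : m ≠ 0)
    (happrox : |ω * log (d * k + 1) - m| ≤ 1 / V)
    (happrox' : |ω * log (d' * k + 1) - m'| ≤ 1 / V) :
    k ∈ clusterCover Y (4 / V) ⌊4 * W * log Y⌋₊ S := by
  have hx : 1 ≤ log Y := by rw [le_log_iff_exp_le (by linarith)]; linarith [exp_one_lt_d9]
  obtain ⟨hL, hL3⟩ := log_le_log_mul_add_one_le_three_mul hY (by exact_mod_cast (hS d hd).1)
    (hS d hd).2 hk hk'.le
  obtain ⟨hL', hL3'⟩ := log_le_log_mul_add_one_le_three_mul hY (by exact_mod_cast (hS d' hd').1)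
    (hS d' hd').2 hk hk'.le
  have hratio : |(m' : ℝ) - m * logRatio d d' k| ≤ 4 / V :=
    (abs_sub_mul_div_le_of_abs_sub_le (c := 3) (by linarith) (by linarith) (by linarith)
      happrox happrox').trans_eq (by ring)
  have hmW : |(m : ℝ)| ≤ 4 * W * log Y := by
    have hωL : |ω * log (d * k + 1)| ≤ W * (3 * log Y) := by
      rw [abs_mul, abs_of_pos (by linarith : 0 < log (d * k + 1))]
      exact mul_le_mul hω.le hL3 (by linarith) (by linarith)
    have := abs_sub_abs_le_abs_sub (m : ℝ) (ω * log (d * k + 1))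
    rw [abs_sub_comm] at this
    have hV₁ : 1 / V ≤ 1 := (div_le_one (by linarith)).2 (by linarith)
    nlinarith
  have hm'm : |(m' : ℝ)| ≤ 3 * |(m : ℝ)| + 1 := by
    have hq : |logRatio d d' k| ≤ 3 := by
      rw [logRatio, abs_div, abs_of_pos (by linarith), abs_of_pos (by linarith),
        div_le_iff₀ (by linarith)]
      linarith
    have hV₄ : 4 / V ≤ 1 := (div_le_one (by linarith)).2 hV
    have hmq : |(m : ℝ) * logRatio d d' k| ≤ |(m : ℝ)| * 3 := by rw [abs_mul]; gcongr
    have := abs_sub_abs_le_abs_sub (m' : ℝ) (m * logRatio d d' k)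
    linarith
  have hmB : m.natAbs ≤ ⌊4 * W * log Y⌋₊ := Nat.le_floor (by rwa [Nat.cast_natAbs, Int.cast_abs])
  simp only [clusterCover, ratioHits, mem_biUnion, mem_filter, mem_Ico, mem_erase, mem_Icc,
    mem_offDiag, Prod.exists, Nat.ceil_le, Nat.lt_ceil]
  refine ⟨d, d', ⟨hd, hd', hdd'⟩, m, ⟨hm, abs_le.1 ?_⟩, m', abs_le.1 ?_, ⟨hk, hk'⟩, hratio⟩
  · rw [Int.abs_eq_natAbs]; exact_mod_cast hmB
  · exact_mod_cast hm'm

lemma three_le_and_sixty_mul_log_le_of_exp_le {Y : ℝ} (hY : exp 100 ≤ Y) :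
    3 ≤ Y ∧ 100 ≤ log Y ∧ 60 * log Y ≤ Y := by
  have hY₀ : 0 < Y := (exp_pos 100).trans_le hY
  have hx : 100 ≤ log Y := (le_log_iff_exp_le hY₀).2 hY
  refine ⟨by linarith [add_one_le_exp (100 : ℝ)], hx, ?_⟩
  have hcube := pow_div_factorial_le_exp (x := log Y) (by linarith) 3
  rw [exp_log hY₀] at hcube
  norm_num [Nat.factorial] at hcube
  have hsq : 10000 ≤ log Y ^ 2 := by nlinarith
  nlinarith [mul_le_mul_of_nonneg_left hsq (by linarith : 0 ≤ log Y)]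

lemma hundred_mul_le_of_le_div_pow {V W x : ℝ} {n : ℕ} (hx : 100 ≤ x) (hn : n ≠ 0) (hW : 0 ≤ W)
    (h : W ≤ V / x ^ n) : 100 * W ≤ V := by
  have hxn : x ≤ x ^ n := le_self_pow₀ (by linarith) hn
  rw [le_div_iff₀ (by positivity)] at h
  nlinarith

lemma clusterCover_bound_le {Y V W x : ℝ} {B : ℕ} (hx : 100 ≤ x) (hW : 0 ≤ W) (hWV : W ≤ V)
    (hV : 0 < V) (hVY : V ≤ √Y) (hB : (B : ℝ) ≤ 4 * W * x) :
    2 * B * (810 * (4 / V) * Y * x ^ 2 + 9 * B) ≤ 600 * (W / V) * Y * x ^ 4 := by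
  have hY : 0 < Y := sqrt_pos.1 (hV.trans_le hVY)
  have hWY : W ≤ Y / V := by
    rw [le_div_iff₀ hV]
    nlinarith [(le_sqrt' hV).1 hVY]
  have hBY : (B : ℝ) ≤ 4 * (Y / V) * x := hB.trans (by gcongr)
  calc 2 * B * (810 * (4 / V) * Y * x ^ 2 + 9 * B)
      ≤ 2 * (4 * W * x) * (810 * (4 / V) * Y * x ^ 2 + 9 * (4 * (Y / V) * x)) := by gcongr
    _ = 8 * (W / V) * Y * x * (3240 * x ^ 2 + 36 * x) := by field_simp; ring
    _ ≤ 8 * (W / V) * Y * x * (75 * x ^ 3) := by gcongr; nlinarith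
    _ = 600 * (W / V) * Y * x ^ 4 := by ring

theorem clustering_values_are_rare_general (M : ℕ) :
    ∃ Y₀ : ℝ, ∀ Y : ℝ, Y₀ ≤ Y →
      ∀ S : Finset ℕ, S.card = M →
        (∀ d ∈ S, 0 < d ∧ (d : ℝ) ≤ Y) →
        (∀ d ∈ S, ∀ d' ∈ S, d ≠ d' → 1 < |Real.log d - Real.log d'|) →
        ∀ V W : ℝ, V ≤ Real.sqrt Y → 1 ≤ W → W ≤ V / (Real.log Y) ^ (M + 5) →
          ({k : ℕ | Y ≤ (k : ℝ) ∧ (k : ℝ) < 2 * Y ∧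
            ∃ d ∈ S, ∃ d' ∈ S, d ≠ d' ∧
              ∃ ω : ℝ, |ω| < W ∧ ∃ m m' : ℤ, m ≠ 0 ∧ m' ≠ 0 ∧
                |ω * Real.log ((d : ℝ) * k + 1) - (m : ℝ)| ≤ 1 / V ∧
                |ω * Real.log ((d' : ℝ) * k + 1) - (m' : ℝ)| ≤ 1 / V}.ncard : ℝ) ≤
          1200 * (M.choose 2) * (W / V) * Y * (Real.log Y) ^ 4 := by
  refine ⟨exp 100, fun Y hY S hSM hS hspread V W hVY hW hWV => ?_⟩
  obtain ⟨hY3, hx, hYlog⟩ := three_le_and_sixty_mul_log_le_of_exp_le hY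
  have hVW : 100 * W ≤ V := hundred_mul_le_of_le_div_pow hx (by omega) (by linarith) hWV
  set B := ⌊4 * W * log Y⌋₊
  have hB : (B : ℝ) ≤ 4 * W * log Y := Nat.floor_le (by positivity)
  calc _ ≤ ((clusterCover Y (4 / V) B S : Set ℕ).ncard : ℝ) := by
        gcongr
        · exact (clusterCover Y (4 / V) B S).finite_toSet
        · rintro k ⟨hk, hk', d, hd, d', hd', hdd', ω, hω, m, m', hm, -, h, h'⟩
          exact mem_clusterCover hY3 (by linarith) hW hS hk hk' hd hd' hdd' hω hm h h'
    _ = #(clusterCover Y (4 / V) B S) := by rw [Set.ncard_coe_finset]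
    _ ≤ #S.offDiag * (2 * B * (810 * (4 / V) * Y * log Y ^ 2 + 9 * B)) :=
        card_clusterCover_le hY3 hYlog (div_nonneg (by norm_num) (by linarith)) hS hspread
    _ ≤ 2 * M.choose 2 * (600 * (W / V) * Y * log Y ^ 4) := by
        rw [cast_card_offDiag, hSM]
        refine mul_le_mul_of_nonneg_left ?_ (by positivity)
        exact clusterCover_bound_le hx (by linarith) (by linarith) (by linarith) hVY hB
    _ = 1200 * M.choose 2 * (W / V) * Y * log Y ^ 4 := by ring

/-- Values `k ∈ [Y, 2Y)` for which some pair of primes-to-be `d k + 1`, `d' k + 1`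
(with `d ≠ d'` from a set `S` of logarithmic spread `> 1`) "clusters", i.e. admits
`ω` with `|ω| < W` making both `ω log(d k + 1)` and `ω log(d' k + 1)` within `1/V`
of nonzero integers, are rare. -/
theorem clustering_values_are_rare (M : ℕ) (hM : 2 ≤ M) :
    ∃ Y₀ : ℝ, ∀ Y : ℝ, Y₀ ≤ Y →
      ∀ S : Finset ℕ, S.card = M →
        (∀ d ∈ S, 0 < d ∧ (d : ℝ) ≤ Y) →
        (∀ d ∈ S, ∀ d' ∈ S, d ≠ d' → 1 < |Real.log d - Real.log d'|) →
        ∀ V W : ℝ, V ≤ Real.sqrt Y → 1 ≤ W → W ≤ V / (Real.log Y) ^ (M + 5) →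
          ({k : ℕ | Y ≤ (k : ℝ) ∧ (k : ℝ) < 2 * Y ∧
            ∃ d ∈ S, ∃ d' ∈ S, d ≠ d' ∧
              ∃ ω : ℝ, |ω| < W ∧ ∃ m m' : ℤ, m ≠ 0 ∧ m' ≠ 0 ∧
                |ω * Real.log ((d : ℝ) * k + 1) - (m : ℝ)| ≤ 1 / V ∧
                |ω * Real.log ((d' : ℝ) * k + 1) - (m' : ℝ)| ≤ 1 / V}.ncard : ℝ) ≤
          1200 * (M.choose 2) * (W / V) * Y * (Real.log Y) ^ 4 :=
  clustering_values_are_rare_general M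
end

section
/- Let 0 < E < 1 and let y ≥ 2 be real with y^{1−E} ≥ 2. Let L be a squarefree positive integer each of whose prime factors p satisfies p ≤ y and P⁺(p − 1) ≤ y^{1−E}, where P⁺(n) denotes the largest prime factor of n. Then λ(L), the exponent of the multiplicative group (ℤ/Lℤ)ˣ, satisfies λ(L) ≤ y^{π(y^{1−E})}, where π(x) is the number of primes at most x. -/
/-!
For squarefree `L` one has `λ(L) = lcm_{p ∣ L} (p - 1) =: N`. Every prime power `r ^ a` exactly
dividing `N` divides some `p - 1`, so `r ^ a < p ≤ y`, and `r ≤ y ^ (1 - E)` because `r ∣ p - 1`.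
Hence `N` is a product of at most `π(y ^ (1 - E))` prime powers, each at most `y`.
-/

open Finset

namespace Nat

variable {ι : Type*} {s : Finset ι} {f : ι → ℕ}

theorem exists_ordProj_finset_lcm_dvd (hf : ∀ a ∈ s, f a ≠ 0) {r : ℕ}
    (hr : r ∈ (s.lcm f).primeFactors) : ∃ a ∈ s, r ^ (s.lcm f).factorization r ∣ f a := by
  have hs : s.Nonempty := by
    rw [Finset.nonempty_iff_ne_empty]
    rintro rfl
    simp at hr
  obtain ⟨a, ha, hmax⟩ := s.exists_mem_eq_sup hs fun a => (f a).factorization r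
  exact ⟨a, ha, Finset.factorization_lcm hf r ▸ hmax ▸ ordProj_dvd (f a) r⟩

theorem primeFactors_finset_lcm_subset (hf : ∀ a ∈ s, f a ≠ 0) :
    (s.lcm f).primeFactors ⊆ s.biUnion fun a => (f a).primeFactors := by
  intro r hr
  obtain ⟨a, ha, hdvd⟩ := exists_ordProj_finset_lcm_dvd hf hr
  have hpos : (s.lcm f).factorization r ≠ 0 := by
    rwa [← Finsupp.mem_support_iff, support_factorization]
  exact mem_biUnion.2 ⟨a, ha, mem_primeFactors.2
    ⟨prime_of_mem_primeFactors hr, (dvd_pow_self r hpos).trans hdvd, hf a ha⟩⟩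

theorem card_primeFactors_finset_lcm_le_primeCounting (hf : ∀ a ∈ s, f a ≠ 0) {z : ℕ}
    (hz : ∀ a ∈ s, ∀ r ∈ (f a).primeFactors, r ≤ z) :
    #(s.lcm f).primeFactors ≤ primeCounting z := by
  rw [← primesLE_card_eq_primeCounting]
  refine card_le_card fun r hr => ?_
  obtain ⟨a, ha, hra⟩ := mem_biUnion.1 (primeFactors_finset_lcm_subset hf hr)
  exact mem_primesLE.2 ⟨hz a ha r hra, prime_of_mem_primeFactors hra⟩

theorem finset_lcm_le_pow_card_primeFactors (hf : ∀ a ∈ s, f a ≠ 0) {B : ℕ}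
    (hB : ∀ a ∈ s, f a ≤ B) : s.lcm f ≤ B ^ #(s.lcm f).primeFactors := by
  set N := s.lcm f
  calc N = ∏ r ∈ N.primeFactors, r ^ N.factorization r :=
        (prod_factorization_pow_eq_self (Finset.lcm_ne_zero_iff.2 hf)).symm
    _ ≤ ∏ _r ∈ N.primeFactors, B := by
        refine prod_le_prod' fun r hr => ?_
        obtain ⟨a, ha, hdvd⟩ := exists_ordProj_finset_lcm_dvd hf hr
        exact (le_of_dvd (pos_of_ne_zero (hf a ha)) hdvd).trans (hB a ha)
    _ = B ^ #N.primeFactors := prod_const B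

end Nat

namespace ArithmeticFunction

theorem carmichael_prime {p : ℕ} (hp : p.Prime) : carmichael p = p - 1 := by
  rcases eq_or_ne p 2 with rfl | hp2
  · simpa using carmichael_two_pow_of_le_two (n := 1) (by norm_num)
  · simpa [Nat.totient_prime hp] using carmichael_pow_of_prime_ne_two 1 hp hp2

theorem carmichael_of_squarefree {n : ℕ} (hn : Squarefree n) :
    carmichael n = n.primeFactors.lcm (· - 1) := by
  conv_lhs => rw [← Nat.prod_primeFactors_of_squarefree hn]
  rw [carmichael_finsetProd fun p hp q hq hpq =>
    (Nat.coprime_primes (Nat.prime_of_mem_primeFactors hp)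
      (Nat.prime_of_mem_primeFactors hq)).2 hpq]
  exact Finset.lcm_congr rfl fun p hp => carmichael_prime (Nat.prime_of_mem_primeFactors hp)

end ArithmeticFunction

theorem carmichael_lambda_bound_general (E : ℝ)
    (y : ℝ) (hy : 2 ≤ y)
    (L : ℕ) (hsq : Squarefree L)
    (hfac : ∀ p ∈ L.primeFactors, (p : ℝ) ≤ y ∧
      ∀ r ∈ (p - 1).primeFactors, (r : ℝ) ≤ y ^ (1 - E)) :
    (Monoid.exponent (ZMod L)ˣ : ℝ) ≤ y ^ (Nat.primeCounting ⌊y ^ (1 - E)⌋₊) := by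
  set N := L.primeFactors.lcm (· - 1)
  have hf : ∀ p ∈ L.primeFactors, p - 1 ≠ 0 := fun p hp =>
    Nat.sub_ne_zero_of_lt (Nat.prime_of_mem_primeFactors hp).one_lt
  have hexp : Monoid.exponent (ZMod L)ˣ = N := by
    rw [← ArithmeticFunction.carmichael_eq_exponent hsq.ne_zero,
      ArithmeticFunction.carmichael_of_squarefree hsq]
  have hN : N ≤ ⌊y⌋₊ ^ #N.primeFactors := Nat.finset_lcm_le_pow_card_primeFactors hf
    fun p hp => (Nat.sub_le p 1).trans (Nat.le_floor (hfac p hp).1)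
  have hcard : #N.primeFactors ≤ Nat.primeCounting ⌊y ^ (1 - E)⌋₊ :=
    Nat.card_primeFactors_finset_lcm_le_primeCounting hf
      fun p hp r hr => Nat.le_floor ((hfac p hp).2 r hr)
  have hy1 : (1 : ℝ) ≤ ⌊y⌋₊ := by exact_mod_cast Nat.one_le_floor_iff y |>.2 (by linarith)
  calc (Monoid.exponent (ZMod L)ˣ : ℝ) ≤ (⌊y⌋₊ : ℝ) ^ #N.primeFactors := by
        rw [hexp]; exact_mod_cast hN
    _ ≤ (⌊y⌋₊ : ℝ) ^ Nat.primeCounting ⌊y ^ (1 - E)⌋₊ := pow_le_pow_right₀ hy1 hcard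
    _ ≤ y ^ Nat.primeCounting ⌊y ^ (1 - E)⌋₊ :=
        pow_le_pow_left₀ (Nat.cast_nonneg _) (Nat.floor_le (by linarith)) _

/-- Bound on the Carmichael function `λ(L) = Monoid.exponent (ZMod L)ˣ` of a squarefree
`L` whose prime factors `p` satisfy `p ≤ y` and `P⁺(p − 1) ≤ y^{1−E}`. -/
theorem carmichael_lambda_bound (E : ℝ) (hE0 : 0 < E) (hE1 : E < 1)
    (y : ℝ) (hy : 2 ≤ y) (hy' : 2 ≤ y ^ (1 - E))
    (L : ℕ) (hL : 0 < L) (hsq : Squarefree L)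
    (hfac : ∀ p ∈ L.primeFactors, (p : ℝ) ≤ y ∧
      ∀ r ∈ (p - 1).primeFactors, (r : ℝ) ≤ y ^ (1 - E)) :
    (Monoid.exponent (ZMod L)ˣ : ℝ) ≤ y ^ (Nat.primeCounting ⌊y ^ (1 - E)⌋₊) :=
  carmichael_lambda_bound_general E y hy L hsq hfac
end
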